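/- In the reduction from two-counter machines to session type equality: if machine M starting from configuration (1, i, j) halts, then T₁[i,j] ≢ T₁'[i,j]; that is, no type bisimulation can relate T₁[i,j] and T₁'[i,j]. -/

import Mathlib

/-- Instructions of a two-counter (Minsky) machine. Instruction indices are 1-based. -/
inductive Instr : Type where
  | inc1 (k : ℕ)        -- increment counter 1; goto k
  | inc2 (k : ℕ)        -- increment counter 2; goto k
  | zdec1 (k l : ℕ)     -- if c₁ = 0 goto k else dec c₁; goto l
  | zdec2 (k l : ℕ)     -- if c₂ = 0 goto k else dec c₂; goto l
  | halt
deriving DecidableEq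

/-- A configuration (i, c₁, c₂): instruction pointer and counter values. -/
abbrev Config := ℕ × ℕ × ℕ

/-- The successor relation C ↦ C' of a two-counter machine M = ι₁,…,ι_m. -/
def Succ (M : List Instr) (C C' : Config) : Prop :=
  match M[C.1 - 1]? with
  | some (.inc1 k) => C' = (k, C.2.1 + 1, C.2.2)
  | some (.inc2 k) => C' = (k, C.2.1, C.2.2 + 1)
  | some (.zdec1 k l) =>
      if C.2.1 = 0 then C' = (k, C.2.1, C.2.2) else C' = (l, C.2.1 - 1, C.2.2)
  | some (.zdec2 k l) =>
      if C.2.2 = 0 then C' = (k, C.2.1, C.2.2) else C' = (l, C.2.1, C.2.2 - 1)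
  | some .halt => False
  | none => False

/-- Closed arithmetically refined session types: internal/external choice over
finite label sets (labels are naturals), tensor, lolli, unit, assertions ?{φ}A,
assumptions !{φ}A, existential and universal quantification over naturals
(represented as families of types), and indexed type variables V[ē] with a
list of (closed) natural-number indices. -/
inductive RTy : Type 1 where
  | ichoice (L : Finset ℕ) (f : ℕ → RTy)
  | echoice (L : Finset ℕ) (f : ℕ → RTy)
  | tensor (A B : RTy)
  | lolli (A B : RTy)
  | one
  | assrt (φ : Prop) (A : RTy)   -- ?{φ}. A
  | assum (φ : Prop) (A : RTy)   -- !{φ}. A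
  | exi (f : ℕ → RTy)            -- ∃n. A
  | all (f : ℕ → RTy)            -- ∀n. A
  | var (v : ℕ) (es : List ℕ)    -- V[ē]

/-- A signature assigns to each indexed type variable and each list of indices
the (instantiated) defining type. -/
abbrev Sig := ℕ → List ℕ → RTy

/-- One-step unfolding of indexed type definitions. -/
def unfoldT (Sg : Sig) : RTy → RTy
  | .var v es => Sg v es
  | A => A

/-- One step of the bisimulation game on closed refined session types. -/
def RStep (R : RTy → RTy → Prop) : RTy → RTy → Prop
  | .ichoice L f, .ichoice L' g => L = L' ∧ ∀ ℓ ∈ L, R (f ℓ) (g ℓ)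
  | .echoice L f, .echoice L' g => L = L' ∧ ∀ ℓ ∈ L, R (f ℓ) (g ℓ)
  | .tensor A₁ A₂, .tensor B₁ B₂ => R A₁ B₁ ∧ R A₂ B₂
  | .lolli A₁ A₂, .lolli B₁ B₂ => R A₁ B₁ ∧ R A₂ B₂
  | .one, .one => True
  | .assrt φ A, .assrt ψ B => (φ ∧ ψ ∧ R A B) ∨ (¬φ ∧ ¬ψ)
  | .assum φ A, .assum ψ B => (φ ∧ ψ ∧ R A B) ∨ (¬φ ∧ ¬ψ)
  | .exi f, .exi g => ∀ i : ℕ, R (f i) (g i)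
  | .all f, .all g => ∀ i : ℕ, R (f i) (g i)
  | _, _ => False

/-- `R` is a type bisimulation on closed refined session types. -/
def IsBisim (Sg : Sig) (R : RTy → RTy → Prop) : Prop :=
  ∀ A B, R A B → RStep R (unfoldT Sg A) (unfoldT Sg B)

/-- Type equality A ≡ B: some type bisimulation relates A and B. -/
def REq (Sg : Sig) (A B : RTy) : Prop :=
  ∃ R, IsBisim Sg R ∧ R A B

/-! The reduction from two-counter machines to type equality.  For a machine
M = ι₁,…,ι_m we define a signature in which type variable `2*p` is T_p[c₁,c₂]
and `2*p+1` is T_p'[c₁,c₂] (indices `es = [c₁,c₂]`).  Labels: ℓ = 0, ℓ' = 1,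
inc₁ = 2, inc₂ = 3, zero₁ = 4, dec₁ = 5, zero₂ = 6, dec₂ = 7.  At a halt
instruction (or an out-of-range instruction pointer, where the computation
also ends) the unprimed type loops as T_inf = ⊕{ℓ : T_inf} and the primed
type as T_inf' = ⊕{ℓ' : T_inf'} with ℓ ≠ ℓ'; all other instructions are
translated identically on both sides using only internal choice and
assertions ?{c = 0}, ?{c > 0}. -/
def SgM (M : List Instr) : Sig := fun v es =>
  let c₁ := es.getD 0 0
  let c₂ := es.getD 1 0
  match M[v / 2 - 1]? with
  | some (.inc1 k) => .ichoice {2} (fun _ => .var (2 * k + v % 2) [c₁ + 1, c₂])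
  | some (.inc2 k) => .ichoice {3} (fun _ => .var (2 * k + v % 2) [c₁, c₂ + 1])
  | some (.zdec1 k l) => .ichoice {4, 5} (fun ℓ =>
      if ℓ = 4 then .assrt (c₁ = 0) (.var (2 * k + v % 2) [c₁, c₂])
      else .assrt (c₁ > 0) (.var (2 * l + v % 2) [c₁ - 1, c₂]))
  | some (.zdec2 k l) => .ichoice {6, 7} (fun ℓ =>
      if ℓ = 6 then .assrt (c₂ = 0) (.var (2 * k + v % 2) [c₁, c₂])
      else .assrt (c₂ > 0) (.var (2 * l + v % 2) [c₁, c₂ - 1]))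
  | _ => .ichoice {v % 2} (fun _ => .var v es)

/-- T₁[i,j]: the type encoding the machine started at configuration (1,i,j). -/
def T₁ (i j : ℕ) : RTy := .var 2 [i, j]

/-- T₁'[i,j]: its primed variant. -/
def T₁' (i j : ℕ) : RTy := .var 3 [i, j]

/-- The computation of M from (1, i, j) is finite. -/
def Halts (M : List Instr) (i j : ℕ) : Prop :=
  ∃ C : Config, Relation.ReflTransGen (Succ M) (1, i, j) C ∧ ∀ C', ¬ Succ M C C'

/-!
A bisimulation relating `T₁[i,j]` and `T₁'[i,j]` must, at every instruction, relate the
primed and unprimed types of the successor configuration: the two sides follow the same labels,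
and in a zero test only the branch whose assertion holds carries information, which is exactly
the branch the machine takes. Along a halting run it therefore relates the two types of the final
configuration, which unfold to internal choices over the distinct singletons `{0}` and `{1}`.
-/

/-- `configType 0 (p, c₁, c₂)` is `T_p[c₁,c₂]` and `configType 1 (p, c₁, c₂)` is `T_p'[c₁,c₂]`. -/
def configType (b : ℕ) (C : Config) : RTy := .var (2 * C.1 + b) [C.2.1, C.2.2]

lemma IsBisim.rel_of_assrt {Sg : Sig} {R : RTy → RTy → Prop} (hR : IsBisim Sg R)
    {φ : Prop} {A B : RTy} (h : R (.assrt φ A) (.assrt φ B)) (hφ : φ) : R A B := by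
  have := hR _ _ h
  simp only [unfoldT, RStep] at this
  tauto

lemma unfoldT_SgM_configType (M : List Instr) {b : ℕ} (hb : b < 2) (C : Config) :
    unfoldT (SgM M) (configType b C) =
      match M[C.1 - 1]? with
      | some (.inc1 k) => .ichoice {2} fun _ => configType b (k, C.2.1 + 1, C.2.2)
      | some (.inc2 k) => .ichoice {3} fun _ => configType b (k, C.2.1, C.2.2 + 1)
      | some (.zdec1 k l) => .ichoice {4, 5} fun ℓ =>
          if ℓ = 4 then .assrt (C.2.1 = 0) (configType b (k, C.2.1, C.2.2))
          else .assrt (C.2.1 > 0) (configType b (l, C.2.1 - 1, C.2.2))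
      | some (.zdec2 k l) => .ichoice {6, 7} fun ℓ =>
          if ℓ = 6 then .assrt (C.2.2 = 0) (configType b (k, C.2.1, C.2.2))
          else .assrt (C.2.2 > 0) (configType b (l, C.2.1, C.2.2 - 1))
      | _ => .ichoice {b} fun _ => configType b C := by
  have hdiv : (2 * C.1 + b) / 2 = C.1 := by omega
  have hmod : (2 * C.1 + b) % 2 = b := by omega
  simp only [unfoldT, SgM, configType, hdiv, hmod, List.getD_cons_zero, List.getD_cons_succ]

namespace IsBisim

variable {M : List Instr} {R : RTy → RTy → Prop}

lemma rel_succ (hR : IsBisim (SgM M) R) {C C' : Config} (hS : Succ M C C')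
    (h : R (configType 0 C) (configType 1 C)) : R (configType 0 C') (configType 1 C') := by
  obtain ⟨p, c₁, c₂⟩ := C
  have hstep := hR _ _ h
  rw [unfoldT_SgM_configType M (by norm_num), unfoldT_SgM_configType M (by norm_num)] at hstep
  simp only [Succ] at hS
  rcases hM : M[p - 1]? with _ | (k | k | ⟨k, l⟩ | ⟨k, l⟩ | _) <;>
    simp only [hM, RStep] at hS hstep
  · exact hS ▸ hstep.2 2 (by simp)
  · exact hS ▸ hstep.2 3 (by simp)
  · split_ifs at hS with hc <;> subst hS
    · exact hR.rel_of_assrt (by simpa using hstep.2 4 (by simp)) hc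
    · exact hR.rel_of_assrt (by simpa using hstep.2 5 (by simp)) (Nat.pos_of_ne_zero hc)
  · split_ifs at hS with hc <;> subst hS
    · exact hR.rel_of_assrt (by simpa using hstep.2 6 (by simp)) hc
    · exact hR.rel_of_assrt (by simpa using hstep.2 7 (by simp)) (Nat.pos_of_ne_zero hc)

lemma exists_succ (hR : IsBisim (SgM M) R) {C : Config}
    (h : R (configType 0 C) (configType 1 C)) : ∃ C', Succ M C C' := by
  obtain ⟨p, c₁, c₂⟩ := C
  have hstep := hR _ _ h
  rw [unfoldT_SgM_configType M (by norm_num), unfoldT_SgM_configType M (by norm_num)] at hstep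
  simp only [Succ]
  rcases hM : M[p - 1]? with _ | (k | k | ⟨k, l⟩ | ⟨k, l⟩ | _) <;>
    simp only [hM, RStep] at hstep ⊢
  · simp at hstep
  · exact ⟨_, rfl⟩
  · exact ⟨_, rfl⟩
  · split_ifs <;> exact ⟨_, rfl⟩
  · split_ifs <;> exact ⟨_, rfl⟩
  · simp at hstep

lemma rel_of_reflTransGen (hR : IsBisim (SgM M) R) {C C' : Config}
    (hC : Relation.ReflTransGen (Succ M) C C') (h : R (configType 0 C) (configType 1 C)) :
    R (configType 0 C') (configType 1 C') := by
  induction hC with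
  | refl => exact h
  | tail _ hS ih => exact hR.rel_succ hS ih

end IsBisim

/-- if machine M starting from (1, i, j) halts, then
T₁[i,j] ≢ T₁'[i,j]: no type bisimulation can relate them. -/
theorem halting_implies_type_unequal (M : List Instr) (i j : ℕ)
    (h : Halts M i j) : ¬ REq (SgM M) (T₁ i j) (T₁' i j) := by
  rintro ⟨R, hR, hstart⟩
  obtain ⟨C, hpath, hterm⟩ := h
  obtain ⟨C', hS⟩ := hR.exists_succ (hR.rel_of_reflTransGen hpath hstart)
  exact hterm C' hS
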